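/- Consider the Facility Location instance P constructed from a BHM instance (n, M, x, w) with opening cost f = 2. If x_i ⊕ x_j ≠ w_{i,j} for every pair (i, j) ∈ M (the NO case), then the optimal Uniform Facility Location cost of P equals n·(3f + √2) = n·(6 + √2). -/

import Mathlib

/-- The ambient Euclidean space `ℝ^{8n}`: each index `i ∈ {1, …, 2n}` owns the
four coordinates `(i, 0), (i, 1), (i, 2), (i, 3)`. -/
abbrev bhmSpace (n : ℕ) := EuclideanSpace ℝ (Fin (2 * n) × Fin 4)

/-- The 0/1 vector with 1s exactly in the pair of coordinates
`(i, 0), (i, 1)` (if `b = false`) or `(i, 2), (i, 3)` (if `b = true`). -/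
noncomputable def onesPair (n : ℕ) (i : Fin (2 * n)) (b : Bool) : bhmSpace n :=
  WithLp.toLp 2 (fun q => if q.1 = i ∧ (b = true ↔ 2 ≤ (q.2 : ℕ)) then 1 else 0)

/-- The multiset of clients of the Facility Location instance built from a BHM
instance: `100n` copies of `s_i^{x_i} = onesPair n i (x i)` for each
`i ∈ {1, …, 2n}`, plus, for each matching edge `k` joining `(e k).1` to
`(e k).2` with bit `w k`, one copy of
`t⁰ = onesPair n (e k).1 false + onesPair n (e k).2 (!(w k))` and one copy of
`t¹ = onesPair n (e k).1 true + onesPair n (e k).2 (w k)`. -/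
noncomputable def bhmClients (n : ℕ) (x : Fin (2 * n) → Bool)
    (e : Fin n → Fin (2 * n) × Fin (2 * n)) (w : Fin n → Bool) :
    Multiset (bhmSpace n) :=
  (Finset.univ : Finset (Fin (2 * n))).val.bind
      (fun i => Multiset.replicate (100 * n) (onesPair n i (x i)))
    + (Finset.univ : Finset (Fin n)).val.bind
      (fun k => {onesPair n (e k).1 false + onesPair n (e k).2 (!(w k)),
                 onesPair n (e k).1 true + onesPair n (e k).2 (w k)})

/-- The Uniform Facility Location cost (with multiplicity) of opening the
nonempty finite facility set `F` for the BHM instance, with opening cost `f`. -/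
noncomputable def bhmCost (n : ℕ) (x : Fin (2 * n) → Bool)
    (e : Fin n → Fin (2 * n) × Fin (2 * n)) (w : Fin n → Bool)
    (f : ℝ) (F : Finset (bhmSpace n)) : ℝ :=
  ((bhmClients n x e w).map (fun p => Metric.infDist p (F : Set (bhmSpace n)))).sum
    + f * F.card

/-- The optimal Uniform Facility Location cost of the BHM instance. -/
noncomputable def bhmOPT (n : ℕ) (x : Fin (2 * n) → Bool)
    (e : Fin n → Fin (2 * n) × Fin (2 * n)) (w : Fin n → Bool) (f : ℝ) : ℝ :=
  sInf {c : ℝ | ∃ F : Finset (bhmSpace n), F.Nonempty ∧ c = bhmCost n x e w f F}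

/-!
Opening the `2n` heavy points `s_i^{x_i}` and, for every edge `{i, j}`, the point
`s_i^{¬x_i} + s_j^{¬x_j}` costs `2 · 3n`. In the NO case every client is then served at distance
`0` except the `n` clients `s_i^{x_i} + s_j^{x_j}`, each at distance `√2` from an open heavy point:
total `n (6 + √2)`.

For the lower bound, put dual values `1 / (50n)` on each heavy client and `√2`, `2` on the edge
clients `s_i^{x_i} + s_j^{x_j}`, `s_i^{¬x_i} + s_j^{¬x_j}`; they add up to `n (6 + √2)`, and weak
duality reduces the claim to feasibility: no facility `q` collects more than `f = 2`. The edge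
clients are pairwise `2√2` apart, so together they pay at most `2` to any `q`. If `q` is moreover
within `d < 1 / (50n)` of a heavy point `s_i^{x_i}`, the heavy clients pay `2 - 100 n d`, and every
edge client except `s_i^{x_i} + s_j^{x_j}` is at distance `√6 > 2 + d` from `s_i^{x_i}`, so the
edge clients pay at most `d`.
-/

open Finset Metric

theorem le_infDist_add_sum_max_sub_dist {E : Type*} [PseudoMetricSpace E] {F : Finset E}
    (hF : F.Nonempty) (p : E) (a : ℝ) :
    a ≤ infDist p (F : Set E) + ∑ q ∈ F, max (a - dist p q) 0 := by
  obtain ⟨q₀, hq₀, hdist⟩ :=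
    F.finite_toSet.isCompact.exists_infDist_eq_dist (F.coe_nonempty.2 hF) p
  have hterm : max (a - dist p q₀) 0 ≤ ∑ q ∈ F, max (a - dist p q) 0 :=
    single_le_sum (f := fun q => max (a - dist p q) 0) (fun q _ => le_max_right _ _)
      (mem_coe.1 hq₀)
  linarith [le_max_left (a - dist p q₀) 0]

-- Weak duality for the facility-location LP: `α` is a dual solution feasible for opening cost `f`.
theorem sum_mul_le_sum_mul_infDist_add_mul_card {E ι : Type*} [PseudoMetricSpace E]
    [Fintype ι] (p : ι → E) {w α : ι → ℝ} (hw : ∀ c, 0 ≤ w c) {f : ℝ}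
    (hfeas : ∀ q, ∑ c, w c * max (α c - dist (p c) q) 0 ≤ f)
    {F : Finset E} (hF : F.Nonempty) :
    ∑ c, w c * α c ≤ ∑ c, w c * infDist (p c) (F : Set E) + f * #F :=
  calc ∑ c, w c * α c
      ≤ ∑ c, w c * (infDist (p c) (F : Set E) + ∑ q ∈ F, max (α c - dist (p c) q) 0) :=
        sum_le_sum fun c _ =>
          mul_le_mul_of_nonneg_left (le_infDist_add_sum_max_sub_dist hF _ _) (hw c)
    _ = ∑ c, w c * infDist (p c) (F : Set E)
          + ∑ q ∈ F, ∑ c, w c * max (α c - dist (p c) q) 0 := by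
        simp only [mul_add, sum_add_distrib, mul_sum]
        rw [sum_comm]
    _ ≤ ∑ c, w c * infDist (p c) (F : Set E) + f * #F := by
        grw [sum_le_sum fun q _ => hfeas q, sum_const, nsmul_eq_mul, mul_comm]

theorem sum_sq_norm_sub_le {E ι : Type*} [NormedAddCommGroup E] [InnerProductSpace ℝ E]
    (s : Finset ι) (v : ι → E) :
    ∑ j ∈ s, ∑ l ∈ s, ‖v j - v l‖ ^ 2 ≤ 2 * #s * ∑ j ∈ s, ‖v j‖ ^ 2 := by
  have hexp : ∑ j ∈ s, ∑ l ∈ s, ‖v j - v l‖ ^ 2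
      = 2 * #s * ∑ j ∈ s, ‖v j‖ ^ 2 - 2 * ‖∑ j ∈ s, v j‖ ^ 2 := by
    simp only [norm_sub_sq_real, sum_add_distrib, sum_sub_distrib, ← inner_sum, ← sum_inner,
      sum_const, nsmul_eq_mul, ← mul_sum, real_inner_self_eq_norm_sq]
    ring
  nlinarith [hexp, sq_nonneg ‖∑ j ∈ s, v j‖]

theorem mul_sq_le_sum_sq_dist {E ι : Type*} [NormedAddCommGroup E] [InnerProductSpace ℝ E]
    {p : ι → E} {D : ℝ} (hp : Pairwise fun j l => D ≤ dist (p j) (p l) ^ 2)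
    {s : Finset ι} (hs : s.Nonempty) (q : E) :
    (#s - 1) * D ≤ 2 * ∑ j ∈ s, dist (p j) q ^ 2 := by
  classical
  have hrow : ∀ j ∈ s, (#s - 1) * D ≤ ∑ l ∈ s, ‖(p j - q) - (p l - q)‖ ^ 2 := by
    intro j hj
    have hcard : ((#(s.erase j) : ℕ) : ℝ) = #s - 1 := by
      rw [← card_erase_add_one hj]; push_cast; ring
    rw [← sum_erase s (f := fun l => ‖(p j - q) - (p l - q)‖ ^ 2) (a := j) (by simp), ← hcard,
      ← nsmul_eq_mul, ← sum_const]
    refine sum_le_sum fun l hl => ?_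
    rw [sub_sub_sub_cancel_right, ← dist_eq_norm]
    exact hp (ne_of_mem_erase hl).symm
  have hcard : (1 : ℝ) ≤ #s := by exact_mod_cast hs.card_pos
  have := (sum_le_sum hrow).trans (sum_sq_norm_sub_le s fun j => p j - q)
  simp only [sum_const, nsmul_eq_mul, ← dist_eq_norm] at this
  nlinarith

theorem sum_max_sub_dist_le {E ι : Type*} [NormedAddCommGroup E] [InnerProductSpace ℝ E]
    [Fintype ι] {p : ι → E} {r : ℝ} (hr : 0 < r)
    (hp : Pairwise fun j l => 2 * r ^ 2 ≤ dist (p j) (p l) ^ 2) (q : E) :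
    ∑ j, max (r - dist (p j) q) 0 ≤ r := by
  classical
  set S := univ.filter fun j => dist (p j) q < r
  have hS : ∑ j, max (r - dist (p j) q) 0 = ∑ j ∈ S, (r - dist (p j) q) := by
    rw [sum_filter]
    refine sum_congr rfl fun j _ => ?_
    split_ifs with h
    · exact max_eq_left (by linarith)
    · exact max_eq_right (by linarith)
  rw [hS]
  rcases S.eq_empty_or_nonempty with hSe | hSne
  · simp [hSe, hr.le]
  have hsq := mul_sq_le_sum_sq_dist hp hSne q
  have hlin : ∑ j ∈ S, dist (p j) q ^ 2 ≤ r * ∑ j ∈ S, dist (p j) q := by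
    rw [mul_sum]
    refine sum_le_sum fun j hj => ?_
    have := (mem_filter.1 hj).2
    nlinarith [dist_nonneg (x := p j) (y := q)]
  rw [sum_sub_distrib, sum_const, nsmul_eq_mul]
  nlinarith

variable {n : ℕ}

theorem inner_onesPair (i j : Fin (2 * n)) (b c : Bool) :
    inner ℝ (onesPair n i b) (onesPair n j c) = if (i, b) = (j, c) then 2 else 0 := by
  rw [PiLp.inner_apply, Fintype.sum_prod_type, sum_eq_single i]
  · by_cases hij : i = j
    · subst hij
      cases b <;> cases c <;> simp [onesPair, Fin.sum_univ_four, -Finset.sum_boole] <;> norm_num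
    · simp [onesPair, hij]
  · intro x _ hx
    simp [onesPair, hx]
  · simp

theorem norm_onesPair (i : Fin (2 * n)) (b : Bool) : ‖onesPair n i b‖ = √2 := by
  rw [norm_eq_sqrt_real_inner, inner_onesPair, if_pos rfl]

theorem dist_onesPair {i j : Fin (2 * n)} {b c : Bool} (h : (i, b) ≠ (j, c)) :
    dist (onesPair n i b) (onesPair n j c) = 2 := by
  rw [dist_eq_norm, norm_eq_sqrt_real_inner]
  simp only [inner_sub_left, inner_sub_right, inner_onesPair, if_neg h, if_neg h.symm, ↓reduceIte]
  rw [show (2 : ℝ) - 0 - (0 - 2) = 2 ^ 2 by norm_num, Real.sqrt_sq zero_le_two]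

theorem dist_onesPair_add_onesPair {i₁ i₂ i₃ : Fin (2 * n)} {b₁ b₂ b₃ : Bool}
    (h₁₂ : (i₁, b₁) ≠ (i₂, b₂)) (h₁₃ : (i₁, b₁) ≠ (i₃, b₃)) (h₂₃ : (i₂, b₂) ≠ (i₃, b₃)) :
    dist (onesPair n i₁ b₁ + onesPair n i₂ b₂) (onesPair n i₃ b₃) = √6 := by
  rw [dist_eq_norm, norm_eq_sqrt_real_inner]
  simp only [inner_sub_left, inner_sub_right, inner_add_left, inner_add_right, inner_onesPair,
    if_neg h₁₂, if_neg h₁₃, if_neg h₂₃, if_neg h₁₂.symm, if_neg h₁₃.symm, if_neg h₂₃.symm,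
    ↓reduceIte]
  norm_num

theorem dist_sq_onesPair_add_onesPair {i₁ i₂ i₃ i₄ : Fin (2 * n)} {b₁ b₂ b₃ b₄ : Bool}
    (h₁₂ : (i₁, b₁) ≠ (i₂, b₂)) (h₁₃ : (i₁, b₁) ≠ (i₃, b₃)) (h₁₄ : (i₁, b₁) ≠ (i₄, b₄))
    (h₂₃ : (i₂, b₂) ≠ (i₃, b₃)) (h₂₄ : (i₂, b₂) ≠ (i₄, b₄)) (h₃₄ : (i₃, b₃) ≠ (i₄, b₄)) :
    dist (onesPair n i₁ b₁ + onesPair n i₂ b₂) (onesPair n i₃ b₃ + onesPair n i₄ b₄) ^ 2 = 8 := by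
  rw [dist_eq_norm, ← real_inner_self_eq_norm_sq]
  simp only [inner_sub_left, inner_sub_right, inner_add_left, inner_add_right, inner_onesPair,
    if_neg h₁₂, if_neg h₁₃, if_neg h₁₄, if_neg h₂₃, if_neg h₂₄, if_neg h₃₄, if_neg h₁₂.symm,
    if_neg h₁₃.symm, if_neg h₁₄.symm, if_neg h₂₃.symm, if_neg h₂₄.symm, if_neg h₃₄.symm,
    ↓reduceIte]
  norm_num

def endpoint (e : Fin n → Fin (2 * n) × Fin (2 * n)) (k : Fin n) (s : Bool) : Fin (2 * n) :=
  if s then (e k).2 else (e k).1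

/-- `noClient x e (.inr (k, b))` below is the sum of `onesPair n l.1 l.2` over the two labels
`l = edgeLabel x e k b s`, `s : Bool`. -/
def edgeLabel (x : Fin (2 * n) → Bool) (e : Fin n → Fin (2 * n) × Fin (2 * n)) (k : Fin n)
    (b s : Bool) : Fin (2 * n) × Bool :=
  (endpoint e k s, b ^^ x (endpoint e k s))

/-- For the edge `k = {i, j}`, `b = false` gives `s_i^{x_i} + s_j^{x_j}` and `b = true` its
complement `s_i^{¬x_i} + s_j^{¬x_j}`; in the NO case these are `t⁰` and `t¹` in some order. -/
noncomputable def noClient (x : Fin (2 * n) → Bool) (e : Fin n → Fin (2 * n) × Fin (2 * n)) :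
    Fin (2 * n) ⊕ (Fin n × Bool) → bhmSpace n
  | .inl i => onesPair n i (x i)
  | .inr (k, b) => onesPair n (e k).1 (b ^^ x (e k).1) + onesPair n (e k).2 (b ^^ x (e k).2)

noncomputable def noWeight (n : ℕ) : Fin (2 * n) ⊕ (Fin n × Bool) → ℝ
  | .inl _ => 100 * n
  | .inr _ => 1

noncomputable def noDual (n : ℕ) : Fin (2 * n) ⊕ (Fin n × Bool) → ℝ
  | .inl _ => 1 / (50 * n)
  | .inr (_, b) => if b then 2 else √2

noncomputable def noFacilities (x : Fin (2 * n) → Bool) (e : Fin n → Fin (2 * n) × Fin (2 * n)) :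
    Finset (bhmSpace n) :=
  univ.image (fun i => noClient x e (.inl i)) ∪ univ.image fun k => noClient x e (.inr (k, true))

theorem noDual_inr_le_two (j : Fin n × Bool) : noDual n (.inr j) ≤ 2 := by
  obtain ⟨_, _ | _⟩ := j
  · simp only [noDual, Bool.false_eq_true, ite_false]
    rw [Real.sqrt_le_left] <;> norm_num
  · simp [noDual]

theorem sum_noWeight_mul_noDual (hn : 1 ≤ n) :
    ∑ c, noWeight n c * noDual n c = n * (6 + √2) := by
  have hn' : (n : ℝ) ≠ 0 := by positivity
  simp only [Fintype.sum_sum_type, Fintype.sum_prod_type, Fintype.sum_bool, noWeight, noDual,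
    ↓reduceIte, Bool.false_eq_true, one_mul, sum_const, card_univ, Fintype.card_fin, nsmul_eq_mul]
  push_cast
  field_simp
  ring

section

variable {x : Fin (2 * n) → Bool} {e : Fin n → Fin (2 * n) × Fin (2 * n)} {w : Fin n → Bool}

theorem edgeLabel_ne (hinj : Function.Injective fun q : Fin n × Bool => endpoint e q.1 q.2)
    (t t' : Fin n × Bool × Bool) (h : t ≠ t') :
    edgeLabel x e t.1 t.2.1 t.2.2 ≠ edgeLabel x e t'.1 t'.2.1 t'.2.2 := by
  obtain ⟨k, b, s⟩ := t
  obtain ⟨l, c, u⟩ := t'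
  intro heq
  simp only [edgeLabel, Prod.mk.injEq] at heq
  obtain ⟨hend, hbit⟩ := heq
  obtain ⟨rfl, rfl⟩ := Prod.mk.inj (hinj (a₁ := (k, s)) (a₂ := (l, u)) hend)
  rw [Bool.xor_left_inj] at hbit
  exact h (by rw [hbit])

theorem bhmCost_eq_sum_noClient (hno : ∀ k, Bool.xor (x (e k).1) (x (e k).2) ≠ w k) (f : ℝ)
    (F : Finset (bhmSpace n)) :
    bhmCost n x e w f F = ∑ c, noWeight n c * infDist (noClient x e c) (F : Set (bhmSpace n))
      + f * #F := by
  rw [bhmCost, bhmClients, Multiset.map_add, Multiset.sum_add, Multiset.map_bind,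
    Multiset.map_bind, Multiset.sum_bind, Multiset.sum_bind, ← sum_eq_multiset_sum,
    ← sum_eq_multiset_sum, Fintype.sum_sum_type, Fintype.sum_prod_type]
  congr 2
  · refine sum_congr rfl fun i _ => ?_
    rw [Multiset.map_replicate, Multiset.sum_replicate, nsmul_eq_mul, noWeight]
    push_cast; rfl
  · refine sum_congr rfl fun k _ => ?_
    have hw : w k = !(x (e k).1 ^^ x (e k).2) := by
      simpa [Bool.eq_not_iff] using (hno k).symm
    rw [hw]
    cases h₁ : x (e k).1 <;> cases h₂ : x (e k).2 <;> simp [noWeight, noClient, h₁, h₂, add_comm]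

theorem dist_sq_noClient_inr
    (hinj : Function.Injective fun q : Fin n × Bool => endpoint e q.1 q.2)
    {j l : Fin n × Bool} (h : j ≠ l) :
    dist (noClient x e (.inr j)) (noClient x e (.inr l)) ^ 2 = 8 := by
  obtain ⟨k, b⟩ := j
  obtain ⟨l, c⟩ := l
  have hne := edgeLabel_ne (x := x) hinj
  exact dist_sq_onesPair_add_onesPair (hne (k, b, false) (k, b, true) (by simp))
    (hne (k, b, false) (l, c, false) (by simp_all)) (hne (k, b, false) (l, c, true) (by simp_all))
    (hne (k, b, true) (l, c, false) (by simp_all)) (hne (k, b, true) (l, c, true) (by simp_all))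
    (hne (l, c, false) (l, c, true) (by simp))

theorem dist_noClient_inr_inl
    (hinj : Function.Injective fun q : Fin n × Bool => endpoint e q.1 q.2)
    {k₀ : Fin n} {s₀ : Bool} {i₀ : Fin (2 * n)} (hk₀ : endpoint e k₀ s₀ = i₀) (j : Fin n × Bool) :
    dist (noClient x e (.inr j)) (noClient x e (.inl i₀))
      = if j = (k₀, false) then √2 else √6 := by
  subst hk₀
  obtain ⟨k, b⟩ := j
  split_ifs with hj
  · obtain ⟨rfl, rfl⟩ := Prod.mk.inj hj
    cases s₀ <;> simp [noClient, endpoint, dist_self_add_left, dist_add_self_left, norm_onesPair]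
  · have hne := edgeLabel_ne (x := x) hinj
    have hheavy : noClient x e (.inl (endpoint e k₀ s₀))
        = onesPair n (edgeLabel x e k₀ false s₀).1 (edgeLabel x e k₀ false s₀).2 := by
      simp [noClient, edgeLabel]
    rw [hheavy]
    exact dist_onesPair_add_onesPair (hne (k, b, false) (k, b, true) (by simp))
      (hne (k, b, false) (k₀, false, s₀) (by simp_all))
      (hne (k, b, true) (k₀, false, s₀) (by simp_all))

theorem sum_max_noDual_inr_sub_dist_le_two
    (hinj : Function.Injective fun q : Fin n × Bool => endpoint e q.1 q.2)
    (q : bhmSpace n) :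
    ∑ j, max (noDual n (.inr j) - dist (noClient x e (.inr j)) q) 0 ≤ 2 :=
  calc ∑ j, max (noDual n (.inr j) - dist (noClient x e (.inr j)) q) 0
      ≤ ∑ j, max (2 - dist (noClient x e (.inr j)) q) 0 :=
        sum_le_sum fun j _ => by grw [noDual_inr_le_two]
    _ ≤ 2 := sum_max_sub_dist_le two_pos
        (fun j l h => by simp only [dist_sq_noClient_inr hinj h]; norm_num) q

theorem sum_max_noDual_inr_sub_dist_le
    (hinj : Function.Injective fun q : Fin n × Bool => endpoint e q.1 q.2)
    {k₀ : Fin n} {s₀ : Bool} {i₀ : Fin (2 * n)} (hk₀ : endpoint e k₀ s₀ = i₀) {q : bhmSpace n}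
    (hq : dist (noClient x e (.inl i₀)) q ≤ 1 / 50) :
    ∑ j, max (noDual n (.inr j) - dist (noClient x e (.inr j)) q) 0
      ≤ dist (noClient x e (.inl i₀)) q := by
  set r := dist (noClient x e (.inl i₀)) q
  calc ∑ j, max (noDual n (.inr j) - dist (noClient x e (.inr j)) q) 0
      ≤ ∑ j, if j = (k₀, false) then r else 0 := sum_le_sum fun j _ => ?_
    _ = r := Fintype.sum_ite_eq' _ _
  have htri := dist_triangle_right (noClient x e (.inr j)) (noClient x e (.inl i₀)) q
  rw [dist_noClient_inr_inl hinj hk₀] at htri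
  split_ifs at htri ⊢ with hj
  · subst hj
    exact max_le (by simp only [noDual, Bool.false_eq_true, ite_false]; linarith) dist_nonneg
  · have h6 : 2 + 1 / 50 ≤ √6 := by rw [Real.le_sqrt (by norm_num) (by norm_num)]; norm_num
    exact max_le (by linarith [noDual_inr_le_two j]) le_rfl

theorem sum_max_sub_dist_noClient_inl_eq {i₀ : Fin (2 * n)} {q : bhmSpace n} {a : ℝ}
    (ha : a ≤ 1) (hq : dist (noClient x e (.inl i₀)) q < a) :
    ∑ i, max (a - dist (noClient x e (.inl i)) q) 0 = a - dist (noClient x e (.inl i₀)) q := by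
  rw [sum_eq_single_of_mem i₀ (mem_univ _), max_eq_left (by linarith)]
  intro i _ hi
  have h2 : dist (noClient x e (.inl i)) (noClient x e (.inl i₀)) = 2 :=
    dist_onesPair fun h => hi (Prod.mk.inj h).1
  have := dist_triangle_right (noClient x e (.inl i)) (noClient x e (.inl i₀)) q
  exact max_eq_right (by linarith)

theorem noDual_feasible (hn : 1 ≤ n)
    (hmatch : Function.Bijective fun q : Fin n × Bool => endpoint e q.1 q.2) (q : bhmSpace n) :
    ∑ c, noWeight n c * max (noDual n c - dist (noClient x e c) q) 0 ≤ 2 := by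
  have hn' : (1 : ℝ) ≤ n := by exact_mod_cast hn
  rw [Fintype.sum_sum_type]
  simp only [noWeight.eq_1, noWeight.eq_2, noDual.eq_1, one_mul, ← mul_sum]
  by_cases hfar : ∀ i, 1 / (50 * n) ≤ dist (noClient x e (.inl i)) q
  · rw [sum_eq_zero fun i _ => max_eq_right (by linarith [hfar i]), mul_zero, zero_add]
    exact sum_max_noDual_inr_sub_dist_le_two hmatch.1 q
  push Not at hfar
  obtain ⟨i₀, hi₀⟩ := hfar
  obtain ⟨⟨k₀, s₀⟩, hk₀⟩ := hmatch.2 i₀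
  have ha : 1 / (50 * n) ≤ (1 / 50 : ℝ) := by gcongr; linarith
  rw [sum_max_sub_dist_noClient_inl_eq (ha.trans (by norm_num)) hi₀]
  have hedge := sum_max_noDual_inr_sub_dist_le hmatch.1 hk₀ (hi₀.le.trans ha)
  have h100 : 100 * (n : ℝ) * (1 / (50 * n)) = 2 := by field_simp; ring
  nlinarith [dist_nonneg (x := noClient x e (.inl i₀)) (y := q)]

theorem le_bhmCost (hn : 1 ≤ n)
    (hmatch : Function.Bijective fun q : Fin n × Bool => endpoint e q.1 q.2)
    (hno : ∀ k, Bool.xor (x (e k).1) (x (e k).2) ≠ w k) {F : Finset (bhmSpace n)}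
    (hF : F.Nonempty) :
    n * (6 + √2) ≤ bhmCost n x e w 2 F := by
  rw [bhmCost_eq_sum_noClient hno, ← sum_noWeight_mul_noDual hn]
  refine sum_mul_le_sum_mul_infDist_add_mul_card _ (fun c => ?_) (noDual_feasible hn hmatch) hF
  cases c <;> simp [noWeight]

theorem bhmCost_noFacilities_le (hno : ∀ k, Bool.xor (x (e k).1) (x (e k).2) ≠ w k) :
    bhmCost n x e w 2 (noFacilities x e) ≤ n * (6 + √2) := by
  set F := noFacilities x e
  have hcard : #F ≤ 3 * n := by
    refine (card_union_le _ _).trans ?_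
    grw [card_image_le, card_image_le]
    simp only [card_univ, Fintype.card_fin]
    omega
  have hinl (i) : infDist (noClient x e (.inl i)) (F : Set (bhmSpace n)) = 0 :=
    infDist_zero_of_mem (mem_coe.2 (mem_union_left _ (mem_image_of_mem _ (mem_univ _))))
  have hinr (k) : infDist (noClient x e (.inr (k, true))) (F : Set (bhmSpace n)) = 0 :=
    infDist_zero_of_mem (mem_coe.2 (mem_union_right _ (mem_image_of_mem _ (mem_univ _))))
  have hfalse (k) : infDist (noClient x e (.inr (k, false))) (F : Set (bhmSpace n)) ≤ √2 := by
    refine (infDist_le_dist_of_mem (mem_coe.2 (mem_union_left _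
      (mem_image_of_mem _ (mem_univ (e k).1))))).trans_eq ?_
    simp [noClient, dist_self_add_left, norm_onesPair]
  rw [bhmCost_eq_sum_noClient hno]
  simp only [Fintype.sum_sum_type, Fintype.sum_prod_type, Fintype.sum_bool, noWeight, hinl, hinr,
    mul_zero, sum_const_zero, zero_add, one_mul]
  have hsum : ∑ k, infDist (noClient x e (.inr (k, false))) (F : Set (bhmSpace n)) ≤ n * √2 := by
    grw [sum_le_sum fun k _ => hfalse k, sum_const, card_univ, Fintype.card_fin, nsmul_eq_mul]
  have : (#F : ℝ) ≤ 3 * n := by exact_mod_cast hcard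
  linarith

theorem noFacilities_nonempty (hn : 1 ≤ n) : (noFacilities x e).Nonempty :=
  ⟨_, mem_union_left _ (mem_image_of_mem _ (mem_univ ⟨0, by omega⟩))⟩

end

/-- **NO case.** If `e` describes a perfect matching on
`{1, …, 2n}` and `x_i ⊕ x_j ≠ w_{i,j}` for every edge, then with opening cost
`f = 2` the optimal Uniform Facility Location cost of the instance equals
`n·(3f + √2) = n·(6 + √2)`. -/
theorem stmt_17 (n : ℕ) (hn : 1 ≤ n)
    (x : Fin (2 * n) → Bool) (e : Fin n → Fin (2 * n) × Fin (2 * n))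
    (w : Fin n → Bool)
    (hmatch : Function.Bijective
      (fun q : Fin n × Bool => if q.2 then (e q.1).2 else (e q.1).1))
    (hno : ∀ k, Bool.xor (x (e k).1) (x (e k).2) ≠ w k) :
    bhmOPT n x e w 2 = n * (6 + Real.sqrt 2) := by
  have hF : (noFacilities x e).Nonempty := noFacilities_nonempty hn
  refine IsLeast.csInf_eq ⟨⟨noFacilities x e, hF, ?_⟩, ?_⟩
  · exact le_antisymm (le_bhmCost hn hmatch hno hF) (bhmCost_noFacilities_le hno)
  · rintro c ⟨F, hF, rfl⟩
    exact le_bhmCost hn hmatch hno hF
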